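/- Normalization is idempotent and fixes normal forms: for every MiniJl type τ, NF(NF(τ)) = NF(τ), and if τ is in normal form (InNF τ) then NF(τ) = τ. -/
import Mathlib


/-- MiniJl types -/
inductive Ty : Type
  | pair : Ty → Ty → Ty
  | union : Ty → Ty → Ty
  | int : Ty
  | flt : Ty
  | cmplx : Ty
  | str : Ty
  | real : Ty
  | num : Ty
deriving DecidableEq

/-- Value types: concrete nominal types and pairs of value types. -/
inductive ValTy : Ty → Prop
  | int : ValTy .int
  | flt : ValTy .flt
  | cmplx : ValTy .cmplx
  | str : ValTy .str
  | pair {v1 v2 : Ty} : ValTy v1 → ValTy v2 → ValTy (.pair v1 v2)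

/-- Matching relation `v ⋖ τ`. -/
inductive Matches : Ty → Ty → Prop
  | int : Matches .int .int
  | flt : Matches .flt .flt
  | cmplx : Matches .cmplx .cmplx
  | str : Matches .str .str
  | intReal : Matches .int .real
  | fltReal : Matches .flt .real
  | intNum : Matches .int .num
  | fltNum : Matches .flt .num
  | cmplxNum : Matches .cmplx .num
  | pair {v1 v2 t1 t2 : Ty} : Matches v1 t1 → Matches v2 t2 →
      Matches (.pair v1 v2) (.pair t1 t2)
  | unionL {v t1 t2 : Ty} : Matches v t1 → Matches v (.union t1 t2)
  | unionR {v t1 t2 : Ty} : Matches v t2 → Matches v (.union t1 t2)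

/-- Matching-based semantic subtyping. -/
def SemSub (t1 t2 : Ty) : Prop :=
  ∀ v : Ty, ValTy v → Matches v t1 → Matches v t2

/-- Tag interpretation of types as sets of value types. -/
def interp : Ty → Set Ty
  | .int => {.int}
  | .flt => {.flt}
  | .cmplx => {.cmplx}
  | .str => {.str}
  | .real => {.int, .flt}
  | .num => {.int, .flt, .cmplx}
  | .pair t1 t2 => {v | ∃ v1 ∈ interp t1, ∃ v2 ∈ interp t2, v = .pair v1 v2}
  | .union t1 t2 => interp t1 ∪ interp t2

/-- Declarative subtyping. -/
inductive DeclSub : Ty → Ty → Prop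
  | refl (t : Ty) : DeclSub t t
  | trans {t1 t2 t3 : Ty} : DeclSub t1 t2 → DeclSub t2 t3 → DeclSub t1 t3
  | intReal : DeclSub .int .real
  | fltReal : DeclSub .flt .real
  | realNum : DeclSub .real .num
  | cmplxNum : DeclSub .cmplx .num
  | realUnion : DeclSub .real (.union .int .flt)
  | numUnion : DeclSub .num (.union .real .cmplx)
  | pair {t1 t2 t1' t2' : Ty} : DeclSub t1 t1' → DeclSub t2 t2' →
      DeclSub (.pair t1 t2) (.pair t1' t2')
  | unionL {t1 t2 t' : Ty} : DeclSub t1 t' → DeclSub t2 t' →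
      DeclSub (.union t1 t2) t'
  | unionR1 (t1 t2 : Ty) : DeclSub t1 (.union t1 t2)
  | unionR2 (t1 t2 : Ty) : DeclSub t2 (.union t1 t2)
  | distr1 (t11 t12 t2 : Ty) :
      DeclSub (.pair (.union t11 t12) t2)
        (.union (.pair t11 t2) (.pair t12 t2))
  | distr2 (t1 t21 t22 : Ty) :
      DeclSub (.pair t1 (.union t21 t22))
        (.union (.pair t1 t21) (.pair t1 t22))

/-- Normal form predicate. -/
inductive InNF : Ty → Prop
  | val {v : Ty} : ValTy v → InNF v
  | union {t1 t2 : Ty} : InNF t1 → InNF t2 → InNF (.union t1 t2)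

/-- Union of pairs -/
def unprs : Ty → Ty → Ty
  | .union t11 t12, t2 => .union (unprs t11 t2) (unprs t12 t2)
  | t1, .union t21 t22 => .union (unprs t1 t21) (unprs t1 t22)
  | t1, t2 => .pair t1 t2

/-- Normalization function. -/
def NF : Ty → Ty
  | .int => .int
  | .flt => .flt
  | .cmplx => .cmplx
  | .str => .str
  | .real => .union .int .flt
  | .num => .union (.union .int .flt) .cmplx
  | .pair t1 t2 => unprs (NF t1) (NF t2)
  | .union t1 t2 => .union (NF t1) (NF t2)

/-- Reductive subtyping. -/
inductive RedSub : Ty → Ty → Prop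
  | intRefl : RedSub .int .int
  | fltRefl : RedSub .flt .flt
  | cmplxRefl : RedSub .cmplx .cmplx
  | strRefl : RedSub .str .str
  | intReal : RedSub .int .real
  | fltReal : RedSub .flt .real
  | cmplxNum : RedSub .cmplx .num
  | intNum : RedSub .int .num
  | fltNum : RedSub .flt .num
  | pair {t1 t2 t1' t2' : Ty} : RedSub t1 t1' → RedSub t2 t2' →
      RedSub (.pair t1 t2) (.pair t1' t2')
  | unionL {t1 t2 t' : Ty} : RedSub t1 t' → RedSub t2 t' →
      RedSub (.union t1 t2) t'
  | unionR1 {t t1' t2' : Ty} : RedSub t t1' → RedSub t (.union t1' t2')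
  | unionR2 {t t1' t2' : Ty} : RedSub t t2' → RedSub t (.union t1' t2')
  | nf {t t' : Ty} : RedSub (NF t) t' → RedSub t t'

lemma valty_not_union {v : Ty} (h : ValTy v) : ∀ a b, v ≠ .union a b := by
  cases h <;> intro a b <;> simp

lemma unprs_nonunion {v1 v2 : Ty} (h1 : ∀ a b, v1 ≠ .union a b)
    (h2 : ∀ a b, v2 ≠ .union a b) : unprs v1 v2 = .pair v1 v2 := by
  rw [unprs.eq_def]
  split
  · exact absurd rfl (h1 _ _)
  · exact absurd rfl (h2 _ _)
  · rfl

lemma nf_val {v : Ty} (h : ValTy v) : NF v = v := by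
  induction h with
  | int => rfl
  | flt => rfl
  | cmplx => rfl
  | str => rfl
  | pair h1 h2 ih1 ih2 =>
      simp only [NF]
      rw [ih1, ih2, unprs_nonunion (valty_not_union h1) (valty_not_union h2)]

lemma nf_innf {t : Ty} (h : InNF t) : NF t = t := by
  induction h with
  | val h => exact nf_val h
  | union _ _ ih1 ih2 => show Ty.union _ _ = _; rw [ih1, ih2]

lemma unprs_innf {t1 t2 : Ty} (h1 : InNF t1) (h2 : InNF t2) :
    InNF (unprs t1 t2) := by
  induction h1 with
  | @val v hv1 =>
      induction h2 with
      | val hv2 =>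
          rw [unprs_nonunion (valty_not_union hv1) (valty_not_union hv2)]
          exact .val (.pair hv1 hv2)
      | @union a b ha hb iha ihb =>
          have : unprs v (Ty.union a b) = Ty.union (unprs v a) (unprs v b) := by
            cases hv1 <;> simp [unprs]
          rw [this]; exact .union iha ihb
  | @union x y ha hb iha ihb =>
      have : unprs (Ty.union x y) t2 = Ty.union (unprs x t2) (unprs y t2) := by
        simp [unprs]
      rw [this]; exact .union iha ihb

lemma innf_nf (t : Ty) : InNF (NF t) := by
  induction t with
  | pair t1 t2 ih1 ih2 => exact unprs_innf ih1 ih2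
  | union t1 t2 ih1 ih2 => exact .union ih1 ih2
  | int => exact .val .int
  | flt => exact .val .flt
  | cmplx => exact .val .cmplx
  | str => exact .val .str
  | real => exact .union (.val .int) (.val .flt)
  | num => exact .union (.union (.val .int) (.val .flt)) (.val .cmplx)

theorem nf_idempotent_and_fixes_nf (t : Ty) :
    NF (NF t) = NF t ∧ (InNF t → NF t = t) := by
  exact ⟨nf_innf (innf_nf t), fun h => nf_innf h⟩
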